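/- Let n ≥ 1 and let X, X̄ be real M×(n+1) matrices, J a real (n+1)×(n+1) matrix, and D, D̄, D_int real N×(n+1) matrices with N ≤ n+1 such that D_int D_intᵀ and (D̄J)(D̄J)ᵀ are invertible, with D_int⁺ = D_intᵀ(D_int D_intᵀ)⁻¹ and (D̄J)⁺ = (D̄J)ᵀ((D̄J)(D̄J)ᵀ)⁻¹. Suppose: (i) |X̄_{α,i} − X_{α,i}| ≤ ε for all α, i; (ii) there is κ ≥ 0 with |(D_int − D J)_{β,i}| ≤ κ / n⁴ for all β, i; (iii) for each β there is C_β ≥ 0 with |D̄_{β,i} − D_{β,i}| ≤ ε · C_β for all i. Then ‖X D_int⁺ − X̄ (D̄ J)⁺‖₂ ≤ ((1+√5)/2) · ‖X̄‖₂ · √(N(n+1)) · ( κ / n⁴ + ε · (max_β C_β) · max_i ‖J_{:,i}‖₁ ) · ‖D_int⁺‖₂ · ‖(D̄J)⁺‖₂ + ε · √(M(n+1)) · ‖D_int⁺‖₂. -/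
import Mathlib

open Matrix

/-- The spectral norm of a real matrix. -/
noncomputable def specNorm {m n : ℕ} (A : Matrix (Fin m) (Fin n) ℝ) : ℝ :=
  ‖LinearMap.toContinuousLinearMap (Matrix.toEuclideanLin A)‖

/-- For a matrix `J`, the 1-norm of its `i`-th column. -/
def colNorm1 {n m : ℕ} (J : Matrix (Fin n) (Fin m) ℝ) (i : Fin m) : ℝ :=
  ∑ j, |J j i|

/-- The Moore–Penrose pseudoinverse of a full-row-rank matrix `A`:
`A⁺ = Aᵀ (A Aᵀ)⁻¹`. -/
noncomputable def pinv {m k : ℕ} (A : Matrix (Fin m) (Fin k) ℝ) :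
    Matrix (Fin k) (Fin m) ℝ :=
  Aᵀ * (A * Aᵀ)⁻¹

section Aux
open scoped Matrix.Norms.L2Operator

set_option maxHeartbeats 1000000

lemma aux_specNorm_eq {m n : ℕ} (A : Matrix (Fin m) (Fin n) ℝ) : specNorm A = ‖A‖ := rfl

lemma aux_colNorm1_nonneg {n m : ℕ} (J : Matrix (Fin n) (Fin m) ℝ) (i : Fin m) :
    0 ≤ colNorm1 J i :=
  Finset.sum_nonneg fun j _ => abs_nonneg _

lemma aux_l2_transpose {m n : ℕ} (A : Matrix (Fin m) (Fin n) ℝ) : ‖Aᵀ‖ = ‖A‖ := by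
  rw [← Matrix.l2_opNorm_conjTranspose A]; congr 1

lemma aux_euc_norm_sq (k : ℕ) (y : EuclideanSpace ℝ (Fin k)) :
    ‖y‖ = Real.sqrt (∑ i, (y i) ^ 2) := by
  rw [EuclideanSpace.norm_eq]; congr 1
  exact Finset.sum_congr rfl (fun i _ => by rw [Real.norm_eq_abs, sq_abs])

lemma aux_l2_opNorm_le_of_entries {m n : ℕ} (A : Matrix (Fin m) (Fin n) ℝ) (c : ℝ) (hc : 0 ≤ c)
    (h : ∀ i j, |A i j| ≤ c) : ‖A‖ ≤ Real.sqrt (m * n) * c := by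
  rw [Matrix.l2_opNorm_def]
  apply ContinuousLinearMap.opNorm_le_bound _ (by positivity)
  intro x
  have happ : ‖(LinearEquiv.trans Matrix.toEuclideanLin LinearMap.toContinuousLinearMap A) x‖
      = Real.sqrt (∑ i, (A *ᵥ (WithLp.equiv 2 _ x)) i ^ 2) := by
    rw [aux_euc_norm_sq]; rfl
  rw [happ, aux_euc_norm_sq]
  have key : ∑ i, (A *ᵥ (WithLp.equiv 2 _ x)) i ^ 2
      ≤ ((m * n : ℝ) * (c * c)) * ∑ j, (x j)^2 := by
    have CS : ∀ i, (A *ᵥ (WithLp.equiv 2 _ x)) i ^ 2 ≤ (∑ j, (A i j)^2) * ∑ j, (x j)^2 := by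
      intro i
      exact Finset.sum_mul_sq_le_sq_mul_sq Finset.univ (fun j => A i j) (fun j => x j)
    calc ∑ i, (A *ᵥ (WithLp.equiv 2 _ x)) i ^ 2 ≤ ∑ i : Fin m, (∑ j, (A i j)^2) * ∑ j, (x j)^2 :=
          Finset.sum_le_sum (fun i _ => CS i)
      _ ≤ ∑ i : Fin m, (∑ j : Fin n, c^2) * ∑ j, (x j)^2 := by
          apply Finset.sum_le_sum; intro i _
          apply mul_le_mul_of_nonneg_right _ (by positivity)
          apply Finset.sum_le_sum; intro j _
          calc (A i j)^2 = |A i j|^2 := (sq_abs _).symm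
            _ ≤ c^2 := by nlinarith [h i j, abs_nonneg (A i j)]
      _ = ((m * n : ℝ) * (c * c)) * ∑ j, (x j)^2 := by simp [Finset.sum_const]; ring
  calc Real.sqrt (∑ i, (A *ᵥ (WithLp.equiv 2 _ x)) i ^ 2)
      ≤ Real.sqrt (((m * n : ℝ) * (c * c)) * ∑ j, (x j)^2) := Real.sqrt_le_sqrt key
    _ = Real.sqrt (m * n) * c * Real.sqrt (∑ j, (x j)^2) := by
        rw [Real.sqrt_mul (by positivity), Real.sqrt_mul (by positivity), Real.sqrt_mul_self hc]

lemma aux_mulVec_sq_sum_le {m n : ℕ} (S : Matrix (Fin m) (Fin n) ℝ) (x : EuclideanSpace ℝ (Fin n)) :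
    ∑ i, (S *ᵥ (WithLp.equiv 2 _ x)) i ^ 2 ≤ (‖S‖ * ‖x‖)^2 := by
  have h1 := Matrix.l2_opNorm_mulVec S x
  have h2 : ‖(EuclideanSpace.equiv (Fin m) ℝ).symm (S *ᵥ x)‖
      = Real.sqrt (∑ i, (S *ᵥ (WithLp.equiv 2 _ x)) i ^ 2) := by rw [aux_euc_norm_sq]; rfl
  rw [h2] at h1
  have h3 : (0:ℝ) ≤ ∑ i, (S *ᵥ (WithLp.equiv 2 _ x)) i ^ 2 := by positivity
  nlinarith [Real.sq_sqrt h3, Real.sqrt_nonneg (∑ i, (S *ᵥ (WithLp.equiv 2 _ x)) i ^ 2)]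

lemma aux_l2_opNorm_add_orthog {m n : ℕ} (S T : Matrix (Fin m) (Fin n) ℝ)
    (h : Sᵀ * T = 0) : ‖S + T‖ ≤ Real.sqrt (‖S‖^2 + ‖T‖^2) := by
  rw [Matrix.l2_opNorm_def]
  apply ContinuousLinearMap.opNorm_le_bound _ (Real.sqrt_nonneg _)
  intro x
  set u := (WithLp.equiv 2 (Fin n → ℝ)) x with hu
  have happ : ‖(LinearEquiv.trans Matrix.toEuclideanLin LinearMap.toContinuousLinearMap (S + T)) x‖
      = Real.sqrt (∑ i, ((S *ᵥ u) i + (T *ᵥ u) i) ^ 2) := by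
    rw [aux_euc_norm_sq]
    congr 1
    refine Finset.sum_congr rfl fun i _ => ?_
    congr 1
    show ((S + T) *ᵥ u) i = _
    rw [Matrix.add_mulVec]; rfl
  rw [happ]
  have key0 : ∑ i, (S *ᵥ u) i * (T *ᵥ u) i = 0 := by
    have h' : ∀ j k, (∑ i, S i j * T i k) = 0 := by
      intro j k
      have := congrFun (congrFun h j) k
      simpa [Matrix.mul_apply] using this
    calc ∑ i, (S *ᵥ u) i * (T *ᵥ u) i
        = ∑ i, ∑ j, ∑ k, (S i j * u j) * (T i k * u k) := by
          simp only [Matrix.mulVec, dotProduct, Finset.sum_mul_sum]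
      _ = ∑ j, ∑ k, ∑ i, (S i j * u j) * (T i k * u k) := by
          rw [Finset.sum_comm]
          exact Finset.sum_congr rfl fun j _ => Finset.sum_comm
      _ = ∑ j, ∑ k, (∑ i, S i j * T i k) * (u j * u k) := by
          refine Finset.sum_congr rfl fun j _ => Finset.sum_congr rfl fun k _ => ?_
          rw [Finset.sum_mul]; exact Finset.sum_congr rfl fun i _ => by ring
      _ = 0 := by simp [h']
  have expand : ∑ i, ((S *ᵥ u) i + (T *ᵥ u) i) ^ 2
      = ∑ i, (S *ᵥ u) i ^ 2 + ∑ i, (T *ᵥ u) i ^ 2 := by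
    have : ∀ i : Fin m, ((S *ᵥ u) i + (T *ᵥ u) i) ^ 2
        = (S *ᵥ u) i ^ 2 + (T *ᵥ u) i ^ 2 + 2 * ((S *ᵥ u) i * (T *ᵥ u) i) := fun i => by ring
    rw [Finset.sum_congr rfl fun i _ => this i]
    rw [Finset.sum_add_distrib, Finset.sum_add_distrib, ← Finset.mul_sum, key0]
    ring
  rw [expand]
  have hS := aux_mulVec_sq_sum_le S x
  have hT := aux_mulVec_sq_sum_le T x
  calc Real.sqrt (∑ i, (S *ᵥ u) i ^ 2 + ∑ i, (T *ᵥ u) i ^ 2)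
      ≤ Real.sqrt ((‖S‖^2 + ‖T‖^2) * ‖x‖^2) := by
        apply Real.sqrt_le_sqrt; nlinarith
    _ = Real.sqrt (‖S‖^2 + ‖T‖^2) * ‖x‖ := by
        rw [Real.sqrt_mul (by positivity), Real.sqrt_sq (norm_nonneg _)]

variable {N k : ℕ}

lemma aux_mul_pinv_self (A : Matrix (Fin N) (Fin k) ℝ) (hA : IsUnit (A * Aᵀ).det) :
    A * pinv A = 1 := by
  rw [pinv, ← Matrix.mul_assoc, Matrix.mul_nonsing_inv _ hA]

lemma aux_pinv_transpose_eq (A : Matrix (Fin N) (Fin k) ℝ) : (pinv A)ᵀ = (A * Aᵀ)⁻¹ * A := by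
  rw [pinv, Matrix.transpose_mul, Matrix.transpose_transpose, Matrix.transpose_nonsing_inv,
    Matrix.transpose_mul, Matrix.transpose_transpose]

lemma aux_transpose_pinv_mul (A : Matrix (Fin N) (Fin k) ℝ) (hA : IsUnit (A * Aᵀ).det) :
    Aᵀ * ((pinv A)ᵀ * pinv A) = pinv A := by
  rw [aux_pinv_transpose_eq]
  conv_lhs => rw [pinv]
  have h : (A * Aᵀ)⁻¹ * A * (Aᵀ * (A * Aᵀ)⁻¹) = (A * Aᵀ)⁻¹ := by
    calc (A * Aᵀ)⁻¹ * A * (Aᵀ * (A * Aᵀ)⁻¹)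
        = (A * Aᵀ)⁻¹ * (A * Aᵀ) * (A * Aᵀ)⁻¹ := by simp only [Matrix.mul_assoc]
      _ = (A * Aᵀ)⁻¹ := by rw [Matrix.nonsing_inv_mul _ hA, Matrix.one_mul]
  rw [h, pinv]

lemma aux_proj_mul_transpose (B : Matrix (Fin N) (Fin k) ℝ) (hB : IsUnit (B * Bᵀ).det) :
    (1 - pinv B * B) * Bᵀ = 0 := by
  rw [Matrix.sub_mul, Matrix.one_mul, pinv]
  have h : Bᵀ * (B * Bᵀ)⁻¹ * B * Bᵀ = Bᵀ := by
    calc Bᵀ * (B * Bᵀ)⁻¹ * B * Bᵀ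
        = Bᵀ * ((B * Bᵀ)⁻¹ * (B * Bᵀ)) := by simp only [Matrix.mul_assoc]
      _ = Bᵀ := by rw [Matrix.nonsing_inv_mul _ hB, Matrix.mul_one]
  rw [h, sub_self]

lemma aux_pinvT_mul_proj (B : Matrix (Fin N) (Fin k) ℝ) (hB : IsUnit (B * Bᵀ).det) :
    (pinv B)ᵀ * (1 - pinv B * B) = 0 := by
  rw [Matrix.mul_sub, Matrix.mul_one, aux_pinv_transpose_eq, pinv]
  have h : (B * Bᵀ)⁻¹ * B * (Bᵀ * (B * Bᵀ)⁻¹ * B) = (B * Bᵀ)⁻¹ * B := by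
    calc (B * Bᵀ)⁻¹ * B * (Bᵀ * (B * Bᵀ)⁻¹ * B)
        = (B * Bᵀ)⁻¹ * (B * Bᵀ) * ((B * Bᵀ)⁻¹ * B) := by simp only [Matrix.mul_assoc]
      _ = (B * Bᵀ)⁻¹ * B := by rw [Matrix.nonsing_inv_mul _ hB, Matrix.one_mul]
  rw [h, sub_self]

lemma aux_pinv_diff_identity (A B : Matrix (Fin N) (Fin k) ℝ)
    (hA : IsUnit (A * Aᵀ).det) (hB : IsUnit (B * Bᵀ).det) :
    pinv B - pinv A = -(pinv B * ((B - A) * pinv A))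
      + (1 - pinv B * B) * ((B - A)ᵀ * ((pinv A)ᵀ * pinv A)) := by
  have e1 : A * pinv A = 1 := aux_mul_pinv_self A hA
  have e2 : Aᵀ * ((pinv A)ᵀ * pinv A) = pinv A := aux_transpose_pinv_mul A hA
  have e3 : (1 - pinv B * B) * Bᵀ = 0 := aux_proj_mul_transpose B hB
  have h4 : (B - A) * pinv A = B * pinv A - 1 := by rw [Matrix.sub_mul, e1]
  have h5 : pinv B * ((B - A) * pinv A) = pinv B * (B * pinv A) - pinv B := by
    rw [h4, Matrix.mul_sub, Matrix.mul_one]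
  have h6 : (B - A)ᵀ * ((pinv A)ᵀ * pinv A)
      = Bᵀ * ((pinv A)ᵀ * pinv A) - pinv A := by
    rw [Matrix.transpose_sub, Matrix.sub_mul, e2]
  have h7 : (1 - pinv B * B) * (Bᵀ * ((pinv A)ᵀ * pinv A) - pinv A)
      = -((1 - pinv B * B) * pinv A) := by
    rw [Matrix.mul_sub, ← Matrix.mul_assoc, e3, Matrix.zero_mul, zero_sub]
  have h8 : (1 - pinv B * B) * pinv A = pinv A - pinv B * B * pinv A := by
    rw [Matrix.sub_mul, Matrix.one_mul]
  rw [h5, h6, h7, h8, Matrix.mul_assoc]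
  abel

lemma aux_proj_norm_le_one (B : Matrix (Fin N) (Fin k) ℝ) (hB : IsUnit (B * Bᵀ).det) :
    ‖1 - pinv B * B‖ ≤ 1 := by
  have hsymm : (1 - pinv B * B)ᵀ = 1 - pinv B * B := by
    rw [Matrix.transpose_sub, Matrix.transpose_one, Matrix.transpose_mul, aux_pinv_transpose_eq]
    conv_rhs => rw [pinv]
    rw [Matrix.mul_assoc]
  have hQ : (pinv B * B) * (pinv B * B) = pinv B * B := by
    calc (pinv B * B) * (pinv B * B) = pinv B * (B * pinv B) * B := by
          simp only [Matrix.mul_assoc]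
      _ = pinv B * B := by rw [aux_mul_pinv_self B hB, Matrix.mul_one]
  have hidem : (1 - pinv B * B) * (1 - pinv B * B) = 1 - pinv B * B := by
    simp only [Matrix.mul_sub, Matrix.sub_mul, Matrix.one_mul, Matrix.mul_one, hQ]
    abel
  have hC : (1 - pinv B * B)ᴴ = (1 - pinv B * B)ᵀ :=
    Matrix.conjTranspose_eq_transpose_of_trivial _
  have hns := Matrix.l2_opNorm_conjTranspose_mul_self (1 - pinv B * B)
  rw [hC, hsymm, hidem] at hns
  nlinarith [norm_nonneg (1 - pinv B * B)]

lemma aux_pinv_perturb (A B : Matrix (Fin N) (Fin k) ℝ)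
    (hA : IsUnit (A * Aᵀ).det) (hB : IsUnit (B * Bᵀ).det) :
    ‖pinv B - pinv A‖ ≤
      ‖pinv A‖ * Real.sqrt (‖pinv A‖^2 + ‖pinv B‖^2) * ‖B - A‖ := by
  set S := -(pinv B * ((B - A) * pinv A)) with hS
  set T := (1 - pinv B * B) * ((B - A)ᵀ * ((pinv A)ᵀ * pinv A)) with hT
  have horth : Sᵀ * T = 0 := by
    rw [hS, Matrix.transpose_neg, Matrix.transpose_mul, Matrix.neg_mul, Matrix.mul_assoc, hT,
      ← Matrix.mul_assoc ((pinv B)ᵀ), aux_pinvT_mul_proj B hB, Matrix.zero_mul, Matrix.mul_zero,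
      neg_zero]
  set a := ‖pinv A‖
  set b := ‖pinv B‖
  set e := ‖B - A‖
  have ha : 0 ≤ a := norm_nonneg _
  have hb : 0 ≤ b := norm_nonneg _
  have he : 0 ≤ e := norm_nonneg _
  have hSn : ‖S‖ ≤ b * (e * a) := by
    rw [hS, norm_neg]
    calc ‖pinv B * ((B - A) * pinv A)‖ ≤ b * ‖(B - A) * pinv A‖ := Matrix.l2_opNorm_mul _ _
      _ ≤ b * (e * a) := by
          apply mul_le_mul_of_nonneg_left (Matrix.l2_opNorm_mul _ _) hb
  have hTn : ‖T‖ ≤ e * (a * a) := by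
    rw [hT]
    calc ‖(1 - pinv B * B) * ((B - A)ᵀ * ((pinv A)ᵀ * pinv A))‖
        ≤ ‖1 - pinv B * B‖ * ‖(B - A)ᵀ * ((pinv A)ᵀ * pinv A)‖ := Matrix.l2_opNorm_mul _ _
      _ ≤ 1 * ‖(B - A)ᵀ * ((pinv A)ᵀ * pinv A)‖ := by
          apply mul_le_mul_of_nonneg_right (aux_proj_norm_le_one B hB) (norm_nonneg _)
      _ = ‖(B - A)ᵀ * ((pinv A)ᵀ * pinv A)‖ := one_mul _
      _ ≤ ‖(B - A)ᵀ‖ * ‖(pinv A)ᵀ * pinv A‖ := Matrix.l2_opNorm_mul _ _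
      _ ≤ ‖(B - A)ᵀ‖ * (‖(pinv A)ᵀ‖ * ‖pinv A‖) := by
          apply mul_le_mul_of_nonneg_left (Matrix.l2_opNorm_mul _ _) (norm_nonneg _)
      _ = e * (a * a) := by rw [aux_l2_transpose, aux_l2_transpose]
  have hsq : Real.sqrt (a^2 + b^2) ^ 2 = a^2 + b^2 := Real.sq_sqrt (by positivity)
  have hbound : ‖S‖^2 + ‖T‖^2 ≤ (a * Real.sqrt (a^2 + b^2) * e)^2 := by
    nlinarith [norm_nonneg S, norm_nonneg T, Real.sqrt_nonneg (a^2+b^2), sq_nonneg (a*e),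
      sq_nonneg (b*e)]
  calc ‖pinv B - pinv A‖ = ‖S + T‖ := by rw [← aux_pinv_diff_identity A B hA hB]
    _ ≤ Real.sqrt (‖S‖^2 + ‖T‖^2) := aux_l2_opNorm_add_orthog S T horth
    _ ≤ Real.sqrt ((a * Real.sqrt (a^2 + b^2) * e)^2) := Real.sqrt_le_sqrt hbound
    _ = a * Real.sqrt (a^2 + b^2) * e := Real.sqrt_sq (by positivity)

lemma aux_pinv_perturb_golden (A B : Matrix (Fin N) (Fin k) ℝ)
    (hA : IsUnit (A * Aᵀ).det) (hB : IsUnit (B * Bᵀ).det) :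
    ‖pinv B - pinv A‖ ≤
      (1 + Real.sqrt 5) / 2 * ‖pinv A‖ * ‖pinv B‖ * ‖B - A‖ := by
  have key : ∀ x y : ℝ, 0 ≤ x → 0 ≤ y → x ≤ y →
      x * Real.sqrt (x^2 + y^2) ≤ (1 + Real.sqrt 5) / 2 * x * y := by
    intro x y hx hy hxy
    have h1 : Real.sqrt (x^2 + y^2) ≤ Real.sqrt 2 * y := by
      have h0 : Real.sqrt (x^2 + y^2) ≤ Real.sqrt (2 * y^2) := Real.sqrt_le_sqrt (by nlinarith)
      rwa [Real.sqrt_mul (by norm_num), Real.sqrt_sq hy] at h0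
    have h2 : Real.sqrt 2 ≤ (1 + Real.sqrt 5) / 2 := by
      nlinarith [Real.sq_sqrt (show (0:ℝ) ≤ 2 by norm_num),
        Real.sq_sqrt (show (0:ℝ) ≤ 5 by norm_num),
        Real.sqrt_nonneg 2, Real.sqrt_nonneg 5,
        Real.one_le_sqrt.mpr (show (1:ℝ) ≤ 2 by norm_num)]
    calc x * Real.sqrt (x^2+y^2) ≤ x * (Real.sqrt 2 * y) :=
          mul_le_mul_of_nonneg_left h1 hx
      _ ≤ (1 + Real.sqrt 5) / 2 * x * y := by nlinarith [mul_nonneg hx hy, h2]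
  have ha : (0:ℝ) ≤ ‖pinv A‖ := norm_nonneg _
  have hb : (0:ℝ) ≤ ‖pinv B‖ := norm_nonneg _
  rcases le_total ‖pinv A‖ ‖pinv B‖ with hab | hab
  · refine (aux_pinv_perturb A B hA hB).trans ?_
    apply mul_le_mul_of_nonneg_right _ (norm_nonneg (B - A))
    exact key _ _ ha hb hab
  · have h := aux_pinv_perturb B A hB hA
    rw [norm_sub_rev (pinv A) (pinv B), norm_sub_rev A B] at h
    refine h.trans ?_
    apply mul_le_mul_of_nonneg_right _ (norm_nonneg (B - A))
    calc ‖pinv B‖ * Real.sqrt (‖pinv B‖^2 + ‖pinv A‖^2)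
        ≤ (1 + Real.sqrt 5) / 2 * ‖pinv B‖ * ‖pinv A‖ := key _ _ hb ha hab
      _ = (1 + Real.sqrt 5) / 2 * ‖pinv A‖ * ‖pinv B‖ := by ring

set_option maxHeartbeats 1000000 in
theorem aux_main {M N n : ℕ} [NeZero N]
    (hn : 1 ≤ n) (hNT : N ≤ n + 1)
    (X Xbar : Matrix (Fin M) (Fin (n + 1)) ℝ)
    (J : Matrix (Fin (n + 1)) (Fin (n + 1)) ℝ)
    (D Dbar Dint : Matrix (Fin N) (Fin (n + 1)) ℝ)
    (hDint : IsUnit (Dint * Dintᵀ).det)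
    (hDbarJ : IsUnit ((Dbar * J) * (Dbar * J)ᵀ).det)
    (ε κ : ℝ) (hε : 0 ≤ ε) (hκ : 0 ≤ κ)
    (C : Fin N → ℝ) (hC : ∀ β, 0 ≤ C β)
    (hnoise : ∀ α i, |Xbar α i - X α i| ≤ ε)
    (hspline : ∀ β i, |(Dint - D * J) β i| ≤ κ / (n : ℝ) ^ 4)
    (hdict : ∀ β i, |Dbar β i - D β i| ≤ ε * C β) :
    specNorm (X * pinv Dint - Xbar * pinv (Dbar * J)) ≤
      (1 + Real.sqrt 5) / 2 * specNorm Xbar * Real.sqrt (N * (n + 1)) *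
          (κ / (n : ℝ) ^ 4 +
            ε * Finset.univ.sup' Finset.univ_nonempty C *
              Finset.univ.sup' Finset.univ_nonempty (fun i => colNorm1 J i)) *
          specNorm (pinv Dint) * specNorm (pinv (Dbar * J)) +
        ε * Real.sqrt (M * (n + 1)) * specNorm (pinv Dint) := by
  simp only [aux_specNorm_eq]
  set maxC := Finset.univ.sup' Finset.univ_nonempty C with hmaxC
  set maxJ := Finset.univ.sup' Finset.univ_nonempty (fun i => colNorm1 J i) with hmaxJ
  have hmaxC0 : 0 ≤ maxC := by
    obtain ⟨β⟩ := (inferInstance : Nonempty (Fin N))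
    exact (hC β).trans (Finset.le_sup' C (Finset.mem_univ β))
  have hmaxJ0 : 0 ≤ maxJ := by
    have := Finset.le_sup' (fun i => colNorm1 J i) (Finset.mem_univ (0 : Fin (n+1)))
    exact (aux_colNorm1_nonneg J 0).trans this
  set c : ℝ := κ / (n : ℝ) ^ 4 + ε * maxC * maxJ with hc
  have hn0 : (0:ℝ) < (n:ℝ) := by exact_mod_cast hn
  have hc0 : 0 ≤ c := by
    rw [hc]
    exact add_nonneg (div_nonneg hκ (by positivity)) (mul_nonneg (mul_nonneg hε hmaxC0) hmaxJ0)
  -- entrywise bound on E = Dbar * J - Dint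
  have hE : ∀ β i, |(Dbar * J - Dint) β i| ≤ c := by
    intro β i
    have h1 : (Dbar * J - Dint) β i
        = (∑ j, (Dbar β j - D β j) * J j i) - (Dint - D * J) β i := by
      simp only [Matrix.sub_apply, Matrix.mul_apply, Finset.sum_sub_distrib, sub_mul]
      ring
    rw [h1]
    have h2 : |∑ j, (Dbar β j - D β j) * J j i| ≤ ε * C β * colNorm1 J i := by
      calc |∑ j, (Dbar β j - D β j) * J j i| ≤ ∑ j, |(Dbar β j - D β j) * J j i| :=
            Finset.abs_sum_le_sum_abs _ _
        _ ≤ ∑ j, ε * C β * |J j i| := by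
            apply Finset.sum_le_sum; intro j _
            rw [abs_mul]
            exact mul_le_mul_of_nonneg_right (hdict β j) (abs_nonneg _)
        _ = ε * C β * colNorm1 J i := by rw [colNorm1, Finset.mul_sum]
    have h3 : ε * C β * colNorm1 J i ≤ ε * maxC * maxJ := by
      have hCβ : C β ≤ maxC := Finset.le_sup' C (Finset.mem_univ β)
      have hcol : colNorm1 J i ≤ maxJ := Finset.le_sup' (fun i => colNorm1 J i) (Finset.mem_univ i)
      have e1 : ε * C β ≤ ε * maxC := mul_le_mul_of_nonneg_left hCβ hε
      apply mul_le_mul e1 hcol (aux_colNorm1_nonneg J i) (mul_nonneg hε hmaxC0)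
    calc |(∑ j, (Dbar β j - D β j) * J j i) - (Dint - D * J) β i|
        ≤ |∑ j, (Dbar β j - D β j) * J j i| + |(Dint - D * J) β i| := abs_sub _ _
      _ ≤ ε * maxC * maxJ + κ / (n : ℝ) ^ 4 := add_le_add (h2.trans h3) (hspline β i)
      _ = c := by rw [hc]; ring
  have hEnorm : ‖Dbar * J - Dint‖ ≤ Real.sqrt (N * (n + 1)) * c := by
    have := aux_l2_opNorm_le_of_entries (Dbar * J - Dint) c hc0 hE
    convert this using 3 <;> push_cast <;> ring
  have hXnorm : ‖X - Xbar‖ ≤ Real.sqrt (M * (n + 1)) * ε := by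
    have hij : ∀ α i, |(X - Xbar) α i| ≤ ε := by
      intro α i
      rw [Matrix.sub_apply, abs_sub_comm]
      exact hnoise α i
    have := aux_l2_opNorm_le_of_entries (X - Xbar) ε hε hij
    convert this using 3 <;> push_cast <;> ring
  set a := ‖pinv Dint‖ with haa
  set b := ‖pinv (Dbar * J)‖ with hbb
  have ha : 0 ≤ a := norm_nonneg _
  have hb : 0 ≤ b := norm_nonneg _
  have hphi : (0:ℝ) ≤ (1 + Real.sqrt 5) / 2 := by positivity
  have hdiff : ‖pinv Dint - pinv (Dbar * J)‖
      ≤ (1 + Real.sqrt 5) / 2 * a * b * (Real.sqrt (N * (n + 1)) * c) := by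
    rw [norm_sub_rev]
    refine (aux_pinv_perturb_golden Dint (Dbar * J) hDint hDbarJ).trans ?_
    exact mul_le_mul_of_nonneg_left hEnorm (mul_nonneg (mul_nonneg hphi ha) hb)
  have hsplit : X * pinv Dint - Xbar * pinv (Dbar * J)
      = (X - Xbar) * pinv Dint + Xbar * (pinv Dint - pinv (Dbar * J)) := by
    rw [Matrix.sub_mul, Matrix.mul_sub]
    abel
  have t1 : ‖(X - Xbar) * pinv Dint‖ ≤ Real.sqrt (M * (n + 1)) * ε * a :=
    (Matrix.l2_opNorm_mul _ _).trans (mul_le_mul_of_nonneg_right hXnorm ha)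
  have t2 : ‖Xbar * (pinv Dint - pinv (Dbar * J))‖
      ≤ ‖Xbar‖ * ((1 + Real.sqrt 5) / 2 * a * b * (Real.sqrt (N * (n + 1)) * c)) :=
    (Matrix.l2_opNorm_mul _ _).trans (mul_le_mul_of_nonneg_left hdiff (norm_nonneg _))
  calc ‖X * pinv Dint - Xbar * pinv (Dbar * J)‖
      = ‖(X - Xbar) * pinv Dint + Xbar * (pinv Dint - pinv (Dbar * J))‖ := by rw [hsplit]
    _ ≤ ‖(X - Xbar) * pinv Dint‖ + ‖Xbar * (pinv Dint - pinv (Dbar * J))‖ := norm_add_le _ _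
    _ ≤ Real.sqrt (M * (n + 1)) * ε * a
        + ‖Xbar‖ * ((1 + Real.sqrt 5) / 2 * a * b * (Real.sqrt (N * (n + 1)) * c)) :=
        add_le_add t1 t2
    _ = (1 + Real.sqrt 5) / 2 * ‖Xbar‖ * Real.sqrt (N * (n + 1)) * c * a * b
        + ε * Real.sqrt (M * (n + 1)) * a := by ring

end Aux

/-- Explicit leading-order coefficient-error estimate for the integral
formulation (equation (6) of the paper). -/
theorem int_coefficient_error_explicit {M N n : ℕ} [NeZero N]
    (hn : 1 ≤ n) (hNT : N ≤ n + 1)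
    (X Xbar : Matrix (Fin M) (Fin (n + 1)) ℝ)
    (J : Matrix (Fin (n + 1)) (Fin (n + 1)) ℝ)
    (D Dbar Dint : Matrix (Fin N) (Fin (n + 1)) ℝ)
    (hDint : IsUnit (Dint * Dintᵀ).det)
    (hDbarJ : IsUnit ((Dbar * J) * (Dbar * J)ᵀ).det)
    (ε κ : ℝ) (hε : 0 ≤ ε) (hκ : 0 ≤ κ)
    (C : Fin N → ℝ) (hC : ∀ β, 0 ≤ C β)
    (hnoise : ∀ α i, |Xbar α i - X α i| ≤ ε)
    (hspline : ∀ β i, |(Dint - D * J) β i| ≤ κ / (n : ℝ) ^ 4)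
    (hdict : ∀ β i, |Dbar β i - D β i| ≤ ε * C β) :
    specNorm (X * pinv Dint - Xbar * pinv (Dbar * J)) ≤
      (1 + Real.sqrt 5) / 2 * specNorm Xbar * Real.sqrt (N * (n + 1)) *
          (κ / (n : ℝ) ^ 4 +
            ε * Finset.univ.sup' Finset.univ_nonempty C *
              Finset.univ.sup' Finset.univ_nonempty (fun i => colNorm1 J i)) *
          specNorm (pinv Dint) * specNorm (pinv (Dbar * J)) +
        ε * Real.sqrt (M * (n + 1)) * specNorm (pinv Dint) :=
  aux_main hn hNT X Xbar J D Dbar Dint hDint hDbarJ ε κ hε hκ C hC hnoise hspline hdict
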